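/- Let S = ℝ[x,y,z] and let ℓ_τ, ℓ_1, ℓ_2 be linear forms in S that span the degree-1 part of S. Set m̂_γ = ⟨ℓ_τ, ℓ_1⟩ and m̂_{γ'} = ⟨ℓ_τ, ℓ_2⟩. Then for integers 0 ≤ r ≤ s, ⟨ℓ_τ^{r+1}⟩ ∩ m̂_γ^{s+1} ∩ m̂_{γ'}^{s+1} = ⟨ℓ_τ^{s+1-i} ℓ_1^i ℓ_2^i : 0 ≤ i ≤ s-r⟩. -/

import Mathlib

open MvPolynomial

noncomputable section

/-- `S = ℝ[x,y,z]`. -/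
abbrev S3 := MvPolynomial (Fin 3) ℝ



lemma span_pair_pow {R : Type*} [CommRing R] (a b : R) (n : ℕ) :
    (Ideal.span {a, b}) ^ n = Ideal.span {f | ∃ i ≤ n, f = a ^ (n - i) * b ^ i} := by
  induction n with
  | zero =>
      have : {f : R | ∃ i ≤ 0, f = a ^ (0 - i) * b ^ i} = {1} := by
        ext f; simp
      simp [this, Ideal.span_singleton_one]
  | succ n ih =>
      rw [pow_succ, ih, Ideal.span_mul_span]
      congr 1
      ext f
      simp only [Set.mem_iUnion, Set.mem_setOf_eq, Set.mem_insert_iff, Set.mem_singleton_iff]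
      constructor
      · rintro ⟨x, ⟨i, hi, rfl⟩, y, hy, rfl⟩
        rcases hy with rfl | rfl
        · exact ⟨i, by omega, by rw [show n + 1 - i = (n - i) + 1 by omega, pow_succ]; ring⟩
        · exact ⟨i + 1, by omega, by rw [show n + 1 - (i + 1) = n - i by omega, pow_succ]; ring⟩
      · rintro ⟨i, hi, rfl⟩
        rcases Nat.lt_or_ge i (n + 1) with h | h
        · exact ⟨a ^ (n - i) * b ^ i, ⟨i, by omega, rfl⟩, a, Or.inl rfl,
            by rw [show n + 1 - i = (n - i) + 1 by omega, pow_succ]; ring⟩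
        · have : i = n + 1 := by omega
          subst this
          exact ⟨a ^ (n - n) * b ^ n, ⟨n, le_rfl, rfl⟩, b, Or.inr rfl,
            by rw [show n + 1 - (n + 1) = n - n by omega, pow_succ]; ring⟩
lemma single_le_iff (u v w : ℕ) (d : Fin 3 →₀ ℕ) :
    Finsupp.single 0 u + Finsupp.single 1 v + Finsupp.single 2 w ≤ d ↔
      u ≤ d 0 ∧ v ≤ d 1 ∧ w ≤ d 2 := by
  rw [Finsupp.le_def]
  constructor
  · intro h
    refine ⟨?_, ?_, ?_⟩
    · simpa [Finsupp.single_apply] using h 0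
    · simpa [Finsupp.single_apply] using h 1
    · simpa [Finsupp.single_apply] using h 2
  · rintro ⟨h0, h1, h2⟩ i
    fin_cases i <;> simp [Finsupp.single_apply, *]

lemma key_arith (d : Fin 3 →₀ ℕ) (r s : ℕ) (hrs : r ≤ s) :
    ((Finsupp.single 0 (r+1) ≤ d ∧
      (∃ i ≤ s+1, Finsupp.single 0 (s+1-i) + Finsupp.single 1 i ≤ d)) ∧
      (∃ i ≤ s+1, Finsupp.single 0 (s+1-i) + Finsupp.single 2 i ≤ d)) ↔
    ∃ i ≤ s - r, Finsupp.single 0 (s+1-i) + Finsupp.single 1 i + Finsupp.single 2 i ≤ d := by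
  have e0 : ∀ u : ℕ, (Finsupp.single 0 u ≤ d) ↔ u ≤ d 0 := by
    intro u
    simpa using single_le_iff u 0 0 d
  have e1 : ∀ u v : ℕ, (Finsupp.single 0 u + Finsupp.single 1 v ≤ d) ↔ u ≤ d 0 ∧ v ≤ d 1 := by
    intro u v
    simpa using single_le_iff u v 0 d
  have e2 : ∀ u w : ℕ, (Finsupp.single 0 u + Finsupp.single 2 w ≤ d) ↔ u ≤ d 0 ∧ w ≤ d 2 := by
    intro u w
    simpa using single_le_iff u 0 w d
  simp only [e0, e1, e2, single_le_iff]
  constructor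
  · rintro ⟨⟨h0, i1, hi1, ha1, hb1⟩, i2, hi2, ha2, hb2⟩
    exact ⟨min (min (d 1) (d 2)) (s - r), by omega, by omega, by omega, by omega⟩
  · rintro ⟨i, hi, ha, hb, hc⟩
    exact ⟨⟨by omega, i, by omega, by omega, by omega⟩, i, by omega, by omega, by omega⟩
lemma degree_three (m : Fin 3 →₀ ℕ) : m.degree = m 0 + m 1 + m 2 := by
  rw [Finsupp.degree_apply, Finset.sum_subset (Finset.subset_univ m.support)]
  · rw [Fin.sum_univ_three]
  · intro i _ hi
    exact Finsupp.notMem_support_iff.mp hi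

lemma eq_single_of_degree_one (m : Fin 3 →₀ ℕ) (h : m.degree = 1) :
    ∃ t : Fin 3, m = Finsupp.single t 1 := by
  rw [degree_three] at h
  have : (m 0 = 1 ∧ m 1 = 0 ∧ m 2 = 0) ∨ (m 0 = 0 ∧ m 1 = 1 ∧ m 2 = 0) ∨
      (m 0 = 0 ∧ m 1 = 0 ∧ m 2 = 1) := by omega
  rcases this with ⟨a, b, c⟩ | ⟨a, b, c⟩ | ⟨a, b, c⟩
  · exact ⟨0, by ext i; fin_cases i <;> simp [Finsupp.single_apply, a, b, c]⟩
  · exact ⟨1, by ext i; fin_cases i <;> simp [Finsupp.single_apply, a, b, c]⟩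
  · exact ⟨2, by ext i; fin_cases i <;> simp [Finsupp.single_apply, a, b, c]⟩

lemma repr1 (p : S3) (hp : p ∈ homogeneousSubmodule (Fin 3) ℝ 1) :
    p = ∑ j : Fin 3, coeff (Finsupp.single j 1) p • X j := by
  rw [mem_homogeneousSubmodule] at hp
  apply MvPolynomial.ext
  intro m
  simp only [coeff_sum, coeff_smul, coeff_X', smul_eq_mul]
  by_cases hm : m.degree = 1
  · obtain ⟨t, rfl⟩ := eq_single_of_degree_one m hm
    rw [Finset.sum_eq_single t]
    · simp
    · intro j _ hj
      rw [if_neg fun h => hj (Finsupp.single_left_injective one_ne_zero h), mul_zero]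
    · simp
  · rw [hp.coeff_eq_zero hm]
    symm
    apply Finset.sum_eq_zero
    intro j _
    rw [if_neg, mul_zero]
    intro hc
    apply hm
    rw [← hc, degree_three]; fin_cases j <;> simp [Finsupp.single_apply]

def lin (M : Matrix (Fin 3) (Fin 3) ℝ) : S3 →ₐ[ℝ] S3 :=
  aeval (fun i => ∑ j : Fin 3, M i j • X j)

lemma lin_X (M : Matrix (Fin 3) (Fin 3) ℝ) (i : Fin 3) :
    lin M (X i) = ∑ j : Fin 3, M i j • X j :=
  aeval_X _ _

lemma lin_comp (M N : Matrix (Fin 3) (Fin 3) ℝ) :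
    (lin M).comp (lin N) = lin (N * M) := by
  apply MvPolynomial.algHom_ext
  intro i
  simp only [AlgHom.comp_apply, lin_X, map_sum, map_smul, Matrix.mul_apply,
    Finset.smul_sum, smul_smul, Finset.sum_smul]
  rw [Finset.sum_comm]

lemma lin_one : lin (1 : Matrix (Fin 3) (Fin 3) ℝ) = AlgHom.id ℝ S3 := by
  apply MvPolynomial.algHom_ext
  intro i
  simp [lin_X, Matrix.one_apply, ite_smul]

def linEquiv (M : Matrix (Fin 3) (Fin 3) ℝ) (h : IsUnit M) : S3 ≃ₐ[ℝ] S3 :=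
  AlgEquiv.ofAlgHom (lin M) (lin M⁻¹)
    (by rw [lin_comp, Matrix.nonsing_inv_mul M ((Matrix.isUnit_iff_isUnit_det M).mp h), lin_one])
    (by rw [lin_comp, Matrix.mul_nonsing_inv M ((Matrix.isUnit_iff_isUnit_det M).mp h), lin_one])

lemma linEquiv_apply (M : Matrix (Fin 3) (Fin 3) ℝ) (h : IsUnit M) (p : S3) :
    linEquiv M h p = lin M p := rfl
lemma set1 (r : ℕ) :
    ({(X 0 : S3) ^ (r+1)} : Set S3) =
      (fun e => monomial e (1:ℝ)) '' {Finsupp.single 0 (r+1)} := by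
  rw [Set.image_singleton, X_pow_eq_monomial]

lemma set2 (j : Fin 3) (n : ℕ) :
    {f : S3 | ∃ i ≤ n, f = X 0 ^ (n-i) * X j ^ i} =
      (fun e => monomial e (1:ℝ)) '' {e | ∃ i ≤ n, e = Finsupp.single 0 (n-i) + Finsupp.single j i} := by
  ext f
  simp only [Set.mem_setOf_eq, Set.mem_image]
  constructor
  · rintro ⟨i, hi, rfl⟩
    exact ⟨_, ⟨i, hi, rfl⟩, by rw [X_pow_eq_monomial, X_pow_eq_monomial, monomial_mul, one_mul]⟩
  · rintro ⟨e, ⟨i, hi, rfl⟩, rfl⟩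
    exact ⟨i, hi, by rw [X_pow_eq_monomial, X_pow_eq_monomial, monomial_mul, one_mul]⟩

lemma set3 (k m : ℕ) :
    {f : S3 | ∃ i ≤ k, f = X 0 ^ (m-i) * X 1 ^ i * X 2 ^ i} =
      (fun e => monomial e (1:ℝ)) ''
        {e | ∃ i ≤ k, e = Finsupp.single 0 (m-i) + Finsupp.single 1 i + Finsupp.single 2 i} := by
  ext f
  simp only [Set.mem_setOf_eq, Set.mem_image]
  constructor
  · rintro ⟨i, hi, rfl⟩
    exact ⟨_, ⟨i, hi, rfl⟩, by
      rw [X_pow_eq_monomial, X_pow_eq_monomial, X_pow_eq_monomial, monomial_mul, monomial_mul,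
        one_mul, one_mul]⟩
  · rintro ⟨e, ⟨i, hi, rfl⟩, rfl⟩
    exact ⟨i, hi, by
      rw [X_pow_eq_monomial, X_pow_eq_monomial, X_pow_eq_monomial, monomial_mul, monomial_mul,
        one_mul, one_mul]⟩

lemma mono_case (r s : ℕ) (hrs : r ≤ s) :
    Ideal.span {(X 0 : S3) ^ (r + 1)} ⊓ (Ideal.span {X 0, X 1} : Ideal S3) ^ (s + 1)
        ⊓ (Ideal.span {X 0, X 2} : Ideal S3) ^ (s + 1)
      = Ideal.span {f : S3 | ∃ i ≤ s - r, f = X 0 ^ (s + 1 - i) * X 1 ^ i * X 2 ^ i} := by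
  rw [span_pair_pow, span_pair_pow, set1, set2 1, set2 2, set3]
  ext f
  simp only [Ideal.mem_inf, mem_ideal_span_monomial_image, Set.mem_singleton_iff,
    Set.mem_setOf_eq]
  constructor
  · rintro ⟨⟨hA, hB⟩, hC⟩ d hd
    have hA' := hA d hd
    have hB' := hB d hd
    have hC' := hC d hd
    obtain ⟨e, rfl, he⟩ := hA'
    obtain ⟨e1, ⟨i1, hi1, rfl⟩, hb⟩ := hB'
    obtain ⟨e2, ⟨i2, hi2, rfl⟩, hc⟩ := hC'
    have := (key_arith d r s hrs).mp ⟨⟨he, i1, hi1, hb⟩, i2, hi2, hc⟩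
    obtain ⟨i, hi, h⟩ := this
    exact ⟨_, ⟨i, hi, rfl⟩, h⟩
  · rintro h
    refine ⟨⟨?_, ?_⟩, ?_⟩ <;> intro d hd <;>
      obtain ⟨e, ⟨i, hi, rfl⟩, he⟩ := h d hd <;>
      have := (key_arith d r s hrs).mpr ⟨i, hi, he⟩
    · exact ⟨_, rfl, this.1.1⟩
    · obtain ⟨_, i1, hi1, h1⟩ := this.1
      exact ⟨_, ⟨i1, hi1, rfl⟩, h1⟩
    · obtain ⟨i2, hi2, h2⟩ := this.2
      exact ⟨_, ⟨i2, hi2, rfl⟩, h2⟩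

lemma map_inf_equiv (e : S3 ≃+* S3) (I J : Ideal S3) :
    Ideal.map (e : S3 →+* S3) (I ⊓ J) =
      Ideal.map (e : S3 →+* S3) I ⊓ Ideal.map (e : S3 →+* S3) J := by
  rw [Ideal.map_comap_of_equiv, Ideal.map_comap_of_equiv, Ideal.map_comap_of_equiv,
    Ideal.comap_inf]

/-- Let `ℓ_τ, ℓ_1, ℓ_2` be linearly independent linear forms of `S = ℝ[x,y,z]` (so that they
span the degree-1 part of `S`), and set `m̂_γ = ⟨ℓ_τ, ℓ_1⟩`, `m̂_{γ'} = ⟨ℓ_τ, ℓ_2⟩`.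
Then for `0 ≤ r ≤ s`:
`⟨ℓ_τ^{r+1}⟩ ∩ m̂_γ^{s+1} ∩ m̂_{γ'}^{s+1} = ⟨ℓ_τ^{s+1-i} ℓ_1^i ℓ_2^i : 0 ≤ i ≤ s-r⟩`. -/
theorem stmt14 (ℓτ ℓ1 ℓ2 : S3)
    (hτ : ℓτ ∈ homogeneousSubmodule (Fin 3) ℝ 1)
    (h1 : ℓ1 ∈ homogeneousSubmodule (Fin 3) ℝ 1)
    (h2 : ℓ2 ∈ homogeneousSubmodule (Fin 3) ℝ 1)
    (hind : LinearIndependent ℝ ![ℓτ, ℓ1, ℓ2])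
    (r s : ℕ) (hrs : r ≤ s) :
    Ideal.span {ℓτ ^ (r + 1)} ⊓ (Ideal.span {ℓτ, ℓ1} : Ideal S3) ^ (s + 1)
        ⊓ (Ideal.span {ℓτ, ℓ2} : Ideal S3) ^ (s + 1)
      = Ideal.span {f : S3 | ∃ i ≤ s - r, f = ℓτ ^ (s + 1 - i) * ℓ1 ^ i * ℓ2 ^ i} := by
  classical
  set c : Matrix (Fin 3) (Fin 3) ℝ :=
    Matrix.of fun i j => coeff (Finsupp.single j 1) (![ℓτ, ℓ1, ℓ2] i) with hc_def
  have hL : ∀ i : Fin 3, ![ℓτ, ℓ1, ℓ2] i = ∑ j : Fin 3, c i j • X j := by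
    intro i
    fin_cases i
    · exact repr1 ℓτ hτ
    · exact repr1 ℓ1 h1
    · exact repr1 ℓ2 h2
  have hrows : LinearIndependent ℝ (fun i => c i) := by
    rw [Fintype.linearIndependent_iff]
    intro g hg
    have hg' : ∀ j : Fin 3, ∑ i : Fin 3, g i * c i j = 0 := by
      intro j
      have := congrFun hg j
      simpa [Finset.sum_apply] using this
    refine Fintype.linearIndependent_iff.mp hind g ?_
    calc ∑ i : Fin 3, g i • ![ℓτ, ℓ1, ℓ2] i
        = ∑ i : Fin 3, ∑ j : Fin 3, (g i * c i j) • X j := by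
          simp only [hL, Finset.smul_sum, smul_smul]
      _ = ∑ j : Fin 3, (∑ i : Fin 3, g i * c i j) • X j := by
          rw [Finset.sum_comm]
          simp only [Finset.sum_smul]
      _ = 0 := by simp [hg']
  have hunit : IsUnit c := Matrix.linearIndependent_rows_iff_isUnit.mp hrows
  set σ : S3 ≃+* S3 := (linEquiv c hunit).toRingEquiv with hσ_def
  have hσX : ∀ i : Fin 3, σ (X i) = ![ℓτ, ℓ1, ℓ2] i := by
    intro i
    show linEquiv c hunit (X i) = _
    rw [linEquiv_apply, lin_X, ← hL]
  have hX0 : (σ : S3 →+* S3) (X 0) = ℓτ := hσX 0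
  have hX1 : (σ : S3 →+* S3) (X 1) = ℓ1 := hσX 1
  have hX2 : (σ : S3 →+* S3) (X 2) = ℓ2 := hσX 2
  have hmap := congrArg (Ideal.map (σ : S3 →+* S3)) (mono_case r s hrs)
  rw [map_inf_equiv, map_inf_equiv, Ideal.map_pow, Ideal.map_pow, Ideal.map_span,
    Ideal.map_span, Ideal.map_span, Ideal.map_span, Set.image_singleton, Set.image_pair,
    Set.image_pair] at hmap
  rw [map_pow, hX0, hX1, hX2] at hmap
  convert hmap using 2
  ext g
  simp only [Set.mem_setOf_eq, Set.mem_image]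
  constructor
  · rintro ⟨i, hi, rfl⟩
    exact ⟨X 0 ^ (s + 1 - i) * X 1 ^ i * X 2 ^ i, ⟨i, hi, rfl⟩,
      by rw [map_mul, map_mul, map_pow, map_pow, map_pow, hX0, hX1, hX2]⟩
  · rintro ⟨f, ⟨i, hi, rfl⟩, rfl⟩
    exact ⟨i, hi, by rw [map_mul, map_mul, map_pow, map_pow, map_pow, hX0, hX1, hX2]⟩
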